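/- For every natural number n and every real x, K_n(x) = (1/2) · ( P_{n+1}'(x) P_n(x) − P_{n+1}(x) P_n'(x) ). -/

import Mathlib

open Polynomial Finset

/-- The degree-`n` Legendre polynomial, defined by the Rodrigues formula
`P_n(x) = (1/(2^n n!)) dⁿ/dxⁿ (x²−1)ⁿ`. -/
noncomputable def legendre (n : ℕ) : Polynomial ℝ :=
  Polynomial.C (1 / (2 ^ n * n.factorial : ℝ)) *
    Polynomial.derivative^[n] ((Polynomial.X ^ 2 - 1) ^ n)

/-- `P_n(x)`. -/
noncomputable def P (n : ℕ) (x : ℝ) : ℝ := (legendre n).eval x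

/-- `P_n'(x)`. -/
noncomputable def P' (n : ℕ) (x : ℝ) : ℝ := (Polynomial.derivative (legendre n)).eval x

/-- The normalized reciprocal Christoffel function
`K_n(x) = (1/(n+1)) Σ_{k=0}^{n} ((2k+1)/2) P_k(x)²`. -/
noncomputable def K (n : ℕ) (x : ℝ) : ℝ :=
  (1 / (n + 1)) * ∑ k ∈ Finset.range (n + 1), ((2 * k + 1) / 2 : ℝ) * (P k x) ^ 2

/-!
Write `u = X² - 1` and `Qₙ = Dⁿ uⁿ`. Since `D u^{n+1} = 2(n+1) X uⁿ`, Leibniz' rule for `X · uⁿ`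
gives `P_{n+1}' = x P_n' + (n+1) P_n`; comparing this expansion of `Q_{n+1}` with the one of
`D^{n+1}(u · uⁿ)` gives `(n+1) P_{n+1} = (n+1) x P_n + (x² - 1) P_n'`.
By these recurrences, `(n+1) W_n` for the Wronskian `W_n = P_{n+1}' P_n - P_{n+1} P_n'` equals
both `(n+1)² P_n² - (x² - 1) P_n'²` and `(n+1)² P_{n+1}² - (x² - 1) P_{n+1}'²`. Hence
`(n+2) W_{n+1} - (n+1) W_n = (2n+3) P_{n+1}²`, and `Σ_{k ≤ n} (2k+1) P_k²` telescopes
to `(n+1) W_n`.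
-/

namespace Polynomial

variable (R : Type*) [CommRing R]

noncomputable def rodrigues (n : ℕ) : R[X] := derivative^[n] ((X ^ 2 - 1) ^ n)

variable {R}

theorem derivative_X_sq_sub_one_pow_succ (n : ℕ) :
    derivative ((X ^ 2 - 1 : R[X]) ^ (n + 1)) = (2 * (n + 1)) • ((X ^ 2 - 1) ^ n * X) := by
  rw [derivative_pow_succ]
  simp only [derivative_sub, derivative_X_sq, derivative_one, nsmul_eq_mul, map_add, map_one,
    map_natCast, map_ofNat]
  push_cast
  ring

theorem derivative_rodrigues_succ (n : ℕ) :
    derivative (rodrigues R (n + 1)) =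
      (2 * (n + 1)) • (derivative (rodrigues R n) * X + (n + 1) • rodrigues R n) := by
  rw [rodrigues, ← Function.iterate_succ_apply' derivative, Function.iterate_succ_apply,
    derivative_X_sq_sub_one_pow_succ, iterate_derivative_smul, iterate_derivative_mul_X,
    Nat.add_sub_cancel, Function.iterate_succ_apply', rodrigues]

theorem rodrigues_succ (n : ℕ) :
    rodrigues R (n + 1) =
      2 • ((n + 1) • (rodrigues R n * X) + derivative (rodrigues R n) * (X ^ 2 - 1)) := by
  have h_chain : rodrigues R (n + 1) =
      (2 * (n + 1)) • (rodrigues R n * X + n • derivative^[n - 1] ((X ^ 2 - 1) ^ n)) := by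
    rw [rodrigues, Function.iterate_succ_apply, derivative_X_sq_sub_one_pow_succ,
      iterate_derivative_smul, iterate_derivative_mul_X, rodrigues]
  have h_leibniz : rodrigues R (n + 1) =
      derivative (rodrigues R n) * (X ^ 2 - 1) + (2 * (n + 1)) • (rodrigues R n * X)
        + ((n + 1) * n) • derivative^[n - 1] ((X ^ 2 - 1) ^ n) := by
    have h_split :
        (X ^ 2 - 1 : R[X]) ^ (n + 1) = (X ^ 2 - 1) ^ n * X * X - (X ^ 2 - 1) ^ n := by
      ring
    rw [rodrigues, h_split, iterate_derivative_sub, iterate_derivative_mul_X,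
      iterate_derivative_mul_X, iterate_derivative_mul_X, Nat.add_sub_cancel,
      Function.iterate_succ_apply', rodrigues]
    simp only [nsmul_eq_mul]
    push_cast
    ring
  -- eliminate the unknown `D^{n-1} uⁿ` common to both expansions
  simp only [nsmul_eq_mul] at h_chain h_leibniz ⊢
  push_cast at h_chain h_leibniz ⊢
  linear_combination 2 * h_leibniz - h_chain

end Polynomial

theorem legendre_eq_C_mul_rodrigues (n : ℕ) :
    legendre n = C (1 / (2 ^ n * n.factorial : ℝ)) * rodrigues ℝ n :=
  rfl

theorem one_div_two_pow_mul_factorial_eq (n : ℕ) :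
    (1 / (2 ^ n * n.factorial : ℝ)) = 2 * (n + 1) * (1 / (2 ^ (n + 1) * (n + 1).factorial)) := by
  rw [Nat.factorial_succ]
  field_simp
  push_cast
  ring

theorem derivative_legendre_succ (n : ℕ) :
    derivative (legendre (n + 1)) =
      X * derivative (legendre n) + ((n : ℝ[X]) + 1) * legendre n := by
  rw [legendre_eq_C_mul_rodrigues, legendre_eq_C_mul_rodrigues, derivative_C_mul, derivative_C_mul,
    derivative_rodrigues_succ, one_div_two_pow_mul_factorial_eq n]
  simp only [nsmul_eq_mul, map_mul, map_add, map_natCast, map_ofNat, map_one]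
  push_cast
  ring

theorem succ_mul_legendre_succ (n : ℕ) :
    ((n : ℝ[X]) + 1) * legendre (n + 1) =
      ((n : ℝ[X]) + 1) * X * legendre n + (X ^ 2 - 1) * derivative (legendre n) := by
  rw [legendre_eq_C_mul_rodrigues, legendre_eq_C_mul_rodrigues, derivative_C_mul, rodrigues_succ,
    one_div_two_pow_mul_factorial_eq n]
  simp only [nsmul_eq_mul, map_mul, map_add, map_natCast, map_ofNat, map_one]
  push_cast
  ring

theorem legendre_zero : legendre 0 = 1 := by
  simp [legendre]

noncomputable def legendreWronskian (n : ℕ) : ℝ[X] :=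
  derivative (legendre (n + 1)) * legendre n - legendre (n + 1) * derivative (legendre n)

theorem succ_mul_legendreWronskian (n : ℕ) :
    ((n : ℝ[X]) + 1) * legendreWronskian n =
      ((n : ℝ[X]) + 1) ^ 2 * legendre n ^ 2 - (X ^ 2 - 1) * derivative (legendre n) ^ 2 := by
  rw [legendreWronskian]
  linear_combination (n + 1 : ℝ[X]) * legendre n * derivative_legendre_succ n
    - derivative (legendre n) * succ_mul_legendre_succ n

theorem succ_mul_legendreWronskian' (n : ℕ) :
    ((n : ℝ[X]) + 1) * legendreWronskian n =
      ((n : ℝ[X]) + 1) ^ 2 * legendre (n + 1) ^ 2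
        - (X ^ 2 - 1) * derivative (legendre (n + 1)) ^ 2 := by
  rw [legendreWronskian]
  linear_combination derivative (legendre (n + 1)) *
      ((X ^ 2 - 1) * derivative_legendre_succ n - X * succ_mul_legendre_succ n)
    - (n + 1 : ℝ[X]) * legendre (n + 1) *
      (succ_mul_legendre_succ n - X * derivative_legendre_succ n)

theorem sum_two_mul_add_one_mul_legendre_sq (n : ℕ) :
    ∑ k ∈ range (n + 1), (2 * k + 1 : ℝ[X]) * legendre k ^ 2 =
      ((n : ℝ[X]) + 1) * legendreWronskian n := by
  induction n with
  | zero => simpa [legendre_zero] using (succ_mul_legendreWronskian 0).symm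
  | succ n ih =>
    rw [sum_range_succ, ih]
    linear_combination (norm := (push_cast; ring))
      succ_mul_legendreWronskian' n - succ_mul_legendreWronskian (n + 1)

/-- Christoffel–Darboux: `K_n(x) = (1/2) (P_{n+1}'(x) P_n(x) − P_{n+1}(x) P_n'(x))`. -/
theorem christoffel_darboux (n : ℕ) (x : ℝ) :
    K n x = (1 / 2) * (P' (n + 1) x * P n x - P (n + 1) x * P' n x) := by
  have h := congrArg (eval x) (sum_two_mul_add_one_mul_legendre_sq n)
  simp only [legendreWronskian, eval_finsetSum, eval_mul, eval_add, eval_sub, eval_pow,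
    eval_natCast, eval_ofNat, eval_one] at h
  simp only [K, P, P', div_mul_eq_mul_div, ← sum_div, h]
  field_simp
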